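/- In the crash-fault counting algorithm, suppose at most f nodes ever crash, i.e. |{u ∈ V : ρ(u) ≠ ∞}| ≤ f. Then there exists a round t ≤ f + 1 in which no node crashes, and consequently the algorithm stabilises by round f + 2: for every round t' ≥ f + 2, c(u,t') = c(v,t') for all nodes u, v ∉ F(t'), and c(u,t'+1) = c(u,t') + 1 mod C for every node u ∉ F(t'). Moreover, the algorithm is early-stabilising: if no node crashes in some round t, these agreement and consistency properties hold for all rounds t' > t. -/
import Mathlib


/-- Theorem: the crash-tolerant counter stabilises in `f + 1`
rounds and is early-stabilising.  Crash-fault model: each node `u` has a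
crash round `ρ(u) ∈ ℕ∞` (`⊤` if it never crashes) and `F(t) = {u : ρ(u) ≤ t}`.
Counters `c(v,t) ∈ {0,…,C−1}` with arbitrary round-1 values; received values
`R(v,u,t)` equal `c(u,t)` before the crash round of `u`, `∗ = none` after it,
and arbitrarily one of the two in the crash round; update rule: with
`U(v,t) = {u : R(v,u,t) ≠ ∗}`, node `v` (alive through round `t`) sets
`c(v,t+1) = x + 1 mod C` if some value `x` is reported by a strict majority of
`U(v,t)`, and `c(v,t+1) = 0` otherwise.  If at most `f` nodes ever crash, then
some round `t ≤ f + 1` is crash-free, and consequently the algorithm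
stabilises by round `f + 2`: for every `t' ≥ f + 2` all nodes `u, v ∉ F(t')`
agree on `c(·,t')` and every `u ∉ F(t')` increments its counter modulo `C`.
Moreover the algorithm is early-stabilising: if no node crashes in some round
`t ≥ 1`, these properties hold for all rounds `t' > t`. -/
theorem crash_counter_stabilises {V : Type*} [Fintype V] [DecidableEq V]
    (C f : ℕ) (hC : 1 ≤ C)
    (ρ : V → ℕ∞) (c : V → ℕ → ℕ) (R : V → V → ℕ → Option ℕ)
    (hcrange : ∀ v t, c v t < C)
    (hR1 : ∀ (v u : V) (t : ℕ), (t : ℕ∞) < ρ u → R v u t = some (c u t))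
    (hR2 : ∀ (v u : V) (t : ℕ), ρ u < (t : ℕ∞) → R v u t = none)
    (hR3 : ∀ (v u : V) (t : ℕ), ρ u = (t : ℕ∞) → R v u t = some (c u t) ∨ R v u t = none)
    (hupd : ∀ t : ℕ, 1 ≤ t → ∀ v : V, (t : ℕ∞) < ρ v →
      (∀ x, (Finset.univ.filter fun u => R v u t ≠ none).card <
          2 * ((Finset.univ.filter fun u => R v u t ≠ none).filter
                fun u => R v u t = some x).card →
        c v (t + 1) = (x + 1) % C) ∧
      ((∀ x, ¬((Finset.univ.filter fun u => R v u t ≠ none).card <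
          2 * ((Finset.univ.filter fun u => R v u t ≠ none).filter
                fun u => R v u t = some x).card)) →
        c v (t + 1) = 0))
    (hf : (Finset.univ.filter fun u => ρ u ≠ (⊤ : ℕ∞)).card ≤ f) :
    -- some round `t ≤ f + 1` is crash-free:
    (∃ t, 1 ≤ t ∧ t ≤ f + 1 ∧ ∀ u, ρ u ≠ (t : ℕ∞)) ∧
    -- stabilisation by round `f + 2`:
    (∀ t' : ℕ, f + 2 ≤ t' →
      (∀ u v : V, (t' : ℕ∞) < ρ u → (t' : ℕ∞) < ρ v → c u t' = c v t') ∧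
      (∀ u : V, (t' : ℕ∞) < ρ u → c u (t' + 1) = (c u t' + 1) % C)) ∧
    -- early stabilisation after any crash-free round:
    (∀ t, 1 ≤ t → (∀ u, ρ u ≠ (t : ℕ∞)) → ∀ t' : ℕ, t < t' →
      (∀ u v : V, (t' : ℕ∞) < ρ u → (t' : ℕ∞) < ρ v → c u t' = c v t') ∧
      (∀ u : V, (t' : ℕ∞) < ρ u → c u (t' + 1) = (c u t' + 1) % C)) := by
  classical
  -- Part 1 : some round `t ≤ f + 1` is crash-free
  have part1 : ∃ t, 1 ≤ t ∧ t ≤ f + 1 ∧ ∀ u, ρ u ≠ (t : ℕ∞) := by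
    by_contra h
    push_neg at h
    haveI : Nonempty V := ⟨(h 1 (le_refl 1) (by omega)).choose⟩
    set g : ℕ → V := fun t => if ht : ∃ u, ρ u = (t : ℕ∞) then ht.choose else Classical.arbitrary V with hg
    have hgρ : ∀ t ∈ Finset.Icc 1 (f + 1), ρ (g t) = (t : ℕ∞) := by
      intro t ht
      simp only [Finset.mem_Icc] at ht
      have hex : ∃ u, ρ u = (t : ℕ∞) := h t ht.1 ht.2
      simp only [hg, dif_pos hex]
      exact hex.choose_spec
    have hmaps : ∀ t ∈ Finset.Icc 1 (f + 1), g t ∈ Finset.univ.filter fun u => ρ u ≠ (⊤ : ℕ∞) := by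
      intro t ht
      simp only [Finset.mem_filter, Finset.mem_univ, true_and]
      rw [hgρ t ht]
      exact fun hh => (WithTop.coe_ne_top hh).elim
    have hinj : Set.InjOn g (Finset.Icc 1 (f + 1)) := by
      intro a ha b hb hab
      have h1 := hgρ a ha
      have h2 := hgρ b hb
      rw [hab, h2] at h1
      exact_mod_cast h1.symm
    have hcard := Finset.card_le_card_of_injOn g hmaps hinj
    rw [Nat.card_Icc] at hcard
    omega
  -- increment lemma: from agreement among all nodes alive at round t',
  -- every node alive strictly past t' increments.
  have inc : ∀ t' : ℕ, 1 ≤ t' →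
      (∀ u w : V, (t' : ℕ∞) ≤ ρ u → (t' : ℕ∞) ≤ ρ w → c u t' = c w t') →
      ∀ v : V, (t' : ℕ∞) < ρ v → c v (t' + 1) = (c v t' + 1) % C := by
    intro t' ht' hQ v hv
    have hvU : v ∈ Finset.univ.filter fun u => R v u t' ≠ none := by
      simp [hR1 v v t' hv]
    have hall : ∀ w ∈ (Finset.univ.filter fun u => R v u t' ≠ none),
        R v w t' = some (c v t') := by
      intro w hw
      simp only [Finset.mem_filter, Finset.mem_univ, true_and] at hw
      have hwρ : (t' : ℕ∞) ≤ ρ w := by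
        by_contra hlt
        push_neg at hlt
        exact hw (hR2 v w t' hlt)
      have hcw : c w t' = c v t' := hQ w v hwρ (le_of_lt hv)
      rcases lt_or_eq_of_le hwρ with hlt | heq
      · rw [hR1 v w t' hlt, hcw]
      · rcases hR3 v w t' heq.symm with h1 | h1
        · rw [h1, hcw]
        · exact absurd h1 hw
    have hfilter : ((Finset.univ.filter fun u => R v u t' ≠ none).filter
        fun u => R v u t' = some (c v t')) = (Finset.univ.filter fun u => R v u t' ≠ none) :=
      Finset.filter_true_of_mem hall
    have hmaj : (Finset.univ.filter fun u => R v u t' ≠ none).card <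
        2 * ((Finset.univ.filter fun u => R v u t' ≠ none).filter
              fun u => R v u t' = some (c v t')).card := by
      rw [hfilter]
      have hpos : 0 < (Finset.univ.filter fun u => R v u t' ≠ none).card :=
        Finset.card_pos.mpr ⟨v, hvU⟩
      omega
    exact (hupd t' ht' v hv).1 (c v t') hmaj
  -- base agreement after a crash-free round
  have base : ∀ t : ℕ, 1 ≤ t → (∀ u, ρ u ≠ (t : ℕ∞)) →
      ∀ u v : V, (t : ℕ∞) < ρ u → (t : ℕ∞) < ρ v → c u (t + 1) = c v (t + 1) := by
    intro t ht hfree u v hu hv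
    set A : Finset V := Finset.univ.filter (fun w => (t : ℕ∞) < ρ w) with hA
    have hUeq : ∀ z : V, (Finset.univ.filter fun w => R z w t ≠ none) = A := by
      intro z
      ext w
      simp only [hA, Finset.mem_filter, Finset.mem_univ, true_and]
      constructor
      · intro hw
        rcases lt_trichotomy (ρ w) ((t : ℕ) : ℕ∞) with hlt | heq | hgt
        · exact absurd (hR2 z w t hlt) hw
        · exact absurd heq (hfree w)
        · exact hgt
      · intro hw
        rw [hR1 z w t hw]
        simp
    have hFeq : ∀ z : V, ∀ x, (A.filter fun w => R z w t = some x)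
        = A.filter (fun w => c w t = x) := by
      intro z x
      apply Finset.filter_congr
      intro w hw
      simp only [hA, Finset.mem_filter, Finset.mem_univ, true_and] at hw
      rw [hR1 z w t hw]
      simp
    by_cases hm : ∃ x, A.card < 2 * (A.filter fun w => c w t = x).card
    · obtain ⟨x, hx⟩ := hm
      have h1 := (hupd t ht u hu).1 x
      have h2 := (hupd t ht v hv).1 x
      simp only [hUeq, hFeq] at h1 h2
      rw [h1 hx, h2 hx]
    · push_neg at hm
      have h1 := (hupd t ht u hu).2
      have h2 := (hupd t ht v hv).2
      simp only [hUeq, hFeq] at h1 h2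
      rw [h1 (fun x => not_lt.mpr (hm x)), h2 (fun x => not_lt.mpr (hm x))]
  -- early stabilisation
  have early : ∀ t : ℕ, 1 ≤ t → (∀ u, ρ u ≠ (t : ℕ∞)) → ∀ t' : ℕ, t < t' →
      (∀ u v : V, (t' : ℕ∞) < ρ u → (t' : ℕ∞) < ρ v → c u t' = c v t') ∧
      (∀ u : V, (t' : ℕ∞) < ρ u → c u (t' + 1) = (c u t' + 1) % C) := by
    intro t ht hfree
    have Q : ∀ d : ℕ, ∀ u v : V, ((t + 1 + d : ℕ) : ℕ∞) ≤ ρ u →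
        ((t + 1 + d : ℕ) : ℕ∞) ≤ ρ v → c u (t + 1 + d) = c v (t + 1 + d) := by
      intro d
      induction d with
      | zero =>
        intro u v hu hv
        have hc : ((t : ℕ) : ℕ∞) < ((t + 1 + 0 : ℕ) : ℕ∞) := by
          exact_mod_cast Nat.lt_succ_self t
        have hu' : (t : ℕ∞) < ρ u := lt_of_lt_of_le hc hu
        have hv' : (t : ℕ∞) < ρ v := lt_of_lt_of_le hc hv
        simpa using base t ht hfree u v hu' hv'
      | succ d ih =>
        intro u v hu hv
        have hstep : ((t + 1 + d : ℕ) : ℕ∞) < ((t + 1 + (d + 1) : ℕ) : ℕ∞) := by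
          exact_mod_cast Nat.lt_succ_self (t + 1 + d)
        have hu' : ((t + 1 + d : ℕ) : ℕ∞) < ρ u := lt_of_lt_of_le hstep hu
        have hv' : ((t + 1 + d : ℕ) : ℕ∞) < ρ v := lt_of_lt_of_le hstep hv
        have e1 : c u (t + 1 + d + 1) = (c u (t + 1 + d) + 1) % C :=
          inc (t + 1 + d) (by omega) ih u hu'
        have e2 : c v (t + 1 + d + 1) = (c v (t + 1 + d) + 1) % C :=
          inc (t + 1 + d) (by omega) ih v hv'
        have e3 : c u (t + 1 + d) = c v (t + 1 + d) := ih u v (le_of_lt hu') (le_of_lt hv')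
        show c u (t + 1 + d + 1) = c v (t + 1 + d + 1)
        rw [e1, e2, e3]
    intro t' ht'
    obtain ⟨d, rfl⟩ : ∃ d, t' = t + 1 + d := ⟨t' - t - 1, by omega⟩
    constructor
    · intro u v hu hv
      exact Q d u v (le_of_lt hu) (le_of_lt hv)
    · intro u hu
      exact inc (t + 1 + d) (by omega) (Q d) u hu
  have early' : ∀ t : ℕ∞, 1 ≤ t → (∀ u, ρ u ≠ t) → ∀ t' : ℕ, t < (t' : ℕ∞) →
      (∀ u v : V, (t' : ℕ∞) < ρ u → (t' : ℕ∞) < ρ v → c u t' = c v t') ∧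
      (∀ u : V, (t' : ℕ∞) < ρ u → c u (t' + 1) = (c u t' + 1) % C) := by
    intro t ht hfree t' ht'
    have htop : t ≠ ⊤ := by
      intro h
      rw [h] at ht'
      exact not_top_lt ht'
    lift t to ℕ using htop with n
    exact early n (by exact_mod_cast ht) hfree t' (by exact_mod_cast ht')
  refine ⟨part1, ?_, early'⟩
  obtain ⟨t0, ht01, ht0f, ht0free⟩ := part1
  intro t' ht'
  exact early t0 ht01 ht0free t' (by omega)
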